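/- For every integer Δ ≥ 4 and every r ≥ 0, the quantity ψ(r) := γ_{Δ-1}(r)·γ_Δ(r) + r·γ_{Δ-2}(r)·γ_Δ(r) − r·(γ_{Δ-1}(r))² satisfies ψ(r) ≥ (γ_{Δ-2}(r))² ≥ 1, provided 0 ≤ r ≤ 2. -/

import Mathlib

/-!
Write `a = γ_{Δ-2}(r)`, `t = r^{Δ-2}/(Δ-2)!` and `s = r^{Δ-1}/(Δ-1)!`, so that
`γ_{Δ-1} = a + t` and `γ_Δ = a + t + s`. Two facts tie the tail terms to `a`: `r t = (Δ-1) s`,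
and, since `r^{Δ-3}/(Δ-3)!` is one of the summands of `a`, `(Δ-2) t ≤ r a`. With these,
`r (ψ - a²)` is a sum of manifestly nonnegative terms for `0 ≤ r ≤ 2`.
-/

/-- `gam Δ x = ∑_{k=0}^{Δ-1} x^k / k!` -/
noncomputable def gam (Δ : ℕ) (x : ℝ) : ℝ :=
  ∑ k ∈ Finset.range Δ, x ^ k / (Nat.factorial k)

open scoped Nat

lemma sq_le_of_tail_bounds {a t s r k : ℝ} (hk : 0 < k) (hr0 : 0 ≤ r) (hr2 : r ≤ 2)
    (ht : 0 ≤ t) (hs : 0 ≤ s) (hta : k * t ≤ r * a) (hts : r * t = (k + 1) * s) :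
    a ^ 2 ≤ (a + t) * (a + t + s) + r * a * (a + t + s) - r * (a + t) ^ 2 := by
  rcases hr0.eq_or_lt with rfl | hr
  · obtain rfl : t = 0 := by nlinarith
    obtain rfl : s = 0 := by nlinarith
    nlinarith
  · have key : r * ((a + t) * (a + t + s) + r * a * (a + t + s) - r * (a + t) ^ 2 - a ^ 2)
        = (2 - r) * t * (r * a - k * t) + (1 + r) * s * (r * a - k * t)
          + (2 - r) * k * t ^ 2 + (2 * k + 1) * (s * t)
          + (1 - r) * (r * t - (k + 1) * s) * t := by ring
    have hgap : 0 ≤ r * a - k * t := by linarith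
    have h2r : 0 ≤ 2 - r := by linarith
    have hpos :
        0 ≤ r * ((a + t) * (a + t + s) + r * a * (a + t + s) - r * (a + t) ^ 2 - a ^ 2) := by
      rw [key, hts, sub_self, mul_zero, zero_mul, add_zero]
      have := mul_nonneg (mul_nonneg h2r ht) hgap
      have := mul_nonneg (mul_nonneg (by linarith : (0 : ℝ) ≤ 1 + r) hs) hgap
      have := mul_nonneg (mul_nonneg h2r hk.le) (sq_nonneg t)
      have := mul_nonneg (by linarith : (0 : ℝ) ≤ 2 * k + 1) (mul_nonneg hs ht)
      linarith
    exact sub_nonneg.1 (nonneg_of_mul_nonneg_right hpos hr)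

lemma gam_succ (n : ℕ) (x : ℝ) : gam (n + 1) x = gam n x + x ^ n / n ! := by
  simp [gam, Finset.sum_range_succ]

lemma pow_div_factorial_le_gam {k n : ℕ} (hkn : k < n) {x : ℝ} (hx : 0 ≤ x) :
    x ^ k / k ! ≤ gam n x :=
  Finset.single_le_sum (f := fun i => x ^ i / (i ! : ℝ)) (fun i _ => by positivity)
    (Finset.mem_range.2 hkn)

lemma one_le_gam {n : ℕ} (hn : n ≠ 0) {x : ℝ} (hx : 0 ≤ x) : 1 ≤ gam n x := by
  simpa using pow_div_factorial_le_gam (Nat.pos_of_ne_zero hn) hx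

lemma mul_pow_div_factorial (x : ℝ) (n : ℕ) :
    x * (x ^ n / n !) = (n + 1) * (x ^ (n + 1) / (n + 1)!) := by
  rw [Nat.factorial_succ]
  push_cast
  field_simp
  ring

/-- For every `Δ ≥ 4` and `0 ≤ r ≤ 2`, the quantity
`ψ(r) = γ_{Δ-1}(r)·γ_Δ(r) + r·γ_{Δ-2}(r)·γ_Δ(r) − r·(γ_{Δ-1}(r))²`
satisfies `ψ(r) ≥ (γ_{Δ-2}(r))² ≥ 1`. -/
theorem psi_lower_bound (Δ : ℕ) (hΔ : 4 ≤ Δ) (r : ℝ) (hr0 : 0 ≤ r) (hr2 : r ≤ 2) :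
    (gam (Δ - 2) r) ^ 2
        ≤ gam (Δ - 1) r * gam Δ r + r * gam (Δ - 2) r * gam Δ r
            - r * (gam (Δ - 1) r) ^ 2 ∧
    1 ≤ (gam (Δ - 2) r) ^ 2 := by
  obtain ⟨j, rfl⟩ : ∃ j, Δ = j + 3 := ⟨Δ - 3, by omega⟩
  rw [show j + 3 - 2 = j + 1 by omega, show j + 3 - 1 = j + 1 + 1 by omega,
    show j + 3 = j + 1 + 1 + 1 from rfl, gam_succ (j + 1 + 1), gam_succ (j + 1)]
  have hta : ((j : ℝ) + 1) * (r ^ (j + 1) / (j + 1)!) ≤ r * gam (j + 1) r := by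
    rw [← mul_pow_div_factorial]
    exact mul_le_mul_of_nonneg_left (pow_div_factorial_le_gam (Nat.lt_succ_self j) hr0) hr0
  have hts := mul_pow_div_factorial r (j + 1)
  push_cast at hts
  exact ⟨sq_le_of_tail_bounds (by positivity) hr0 hr2 (by positivity) (by positivity) hta hts,
    one_le_pow₀ (one_le_gam (Nat.succ_ne_zero j) hr0)⟩
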